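/- For every connected graph G, every diameter of G has eccentricity at most 4·k(G); that is, s(G) ≤ 4k(G). -/

import Mathlib

open SimpleGraph

variable {V : Type*}

/-- Distance from a vertex `x` to (the support of) a walk `p`. -/
noncomputable def walkDist (G : SimpleGraph V) {u v : V} (x : V) (p : G.Walk u v) : ℕ :=
  sInf {n | ∃ w ∈ p.support, G.dist x w = n}

/-- A walk is a shortest path when its length equals the distance between its ends. -/
noncomputable def IsShortestPath (G : SimpleGraph V) {u v : V} (p : G.Walk u v) : Prop :=
  p.length = G.dist u v

/-- Eccentricity of a walk: the largest distance from any vertex to the walk. -/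
noncomputable def walkEcc [Fintype V] (G : SimpleGraph V) {u v : V} (p : G.Walk u v) : ℕ :=
  sSup {n | ∃ x : V, walkDist G x p = n}

/-- A diameter: a shortest path of maximum length among all distances. -/
noncomputable def IsDiameter [Fintype V] (G : SimpleGraph V) {u v : V} (p : G.Walk u v) : Prop :=
  IsShortestPath G p ∧ ∀ a b : V, G.dist a b ≤ p.length

/-- `k(G)`: minimum eccentricity over all shortest paths. -/
noncomputable def minK [Fintype V] (G : SimpleGraph V) : ℕ :=
  sInf {n | ∃ (u v : V) (p : G.Walk u v), IsShortestPath G p ∧ walkEcc G p = n}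

/-- `l(G)`: minimum eccentricity over all diameters. -/
noncomputable def minL [Fintype V] (G : SimpleGraph V) : ℕ :=
  sInf {n | ∃ (u v : V) (p : G.Walk u v), IsDiameter G p ∧ walkEcc G p = n}

/-- `s(G)`: maximum eccentricity over all diameters. -/
noncomputable def maxS [Fintype V] (G : SimpleGraph V) : ℕ :=
  sSup {n | ∃ (u v : V) (p : G.Walk u v), IsDiameter G p ∧ walkEcc G p = n}

/-!
Let `P` be a shortest path of eccentricity `k = k(G)`, `D` a diameter, and project every vertex
of `D` to a nearest vertex of `P`. Consecutive vertices of `D` project to positions on `P` at most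
`2k + 1` apart, since `P` is geodesic. The ends of `D` project to positions at least
`diam(G) - 2k ≥ |P| - 2k` apart, so the projections sweep all of `P` up to `2k` at either end and
cannot jump over a window of `4k + 1` positions. Hence for every vertex `x`, with nearest vertex
`P_t` on `P`, some vertex `z` of `D` projects within `2k` of `t`, and
`d(x, z) ≤ k + 2k + k = 4k`.
-/

theorem exists_mem_Icc_of_abs_sub_le {g : ℕ → ℤ} {lo s : ℤ} :
    ∀ {n : ℕ}, (∀ m < n, |g (m + 1) - g m| ≤ s + 1) → lo ≤ max (g 0) (g n) →
      min (g 0) (g n) ≤ lo + s → ∃ m ≤ n, g m ∈ Set.Icc lo (lo + s)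
  | 0, _, hlo, hhi => ⟨0, le_rfl, by omega, by omega⟩
  | n + 1, hstep, hlo, hhi => by
    have hlast := abs_le.mp (hstep n n.lt_succ_self)
    by_cases hprev : lo ≤ max (g 0) (g n) ∧ min (g 0) (g n) ≤ lo + s
    · obtain ⟨m, hm, hgm⟩ :=
        exists_mem_Icc_of_abs_sub_le (fun m hm ↦ hstep m (by omega)) hprev.1 hprev.2
      exact ⟨m, by omega, hgm⟩
    · exact ⟨n + 1, le_rfl, by omega, by omega⟩

namespace SimpleGraph

variable {G : SimpleGraph V} {u v : V}

theorem Connected.dist_triangle₃ (hG : G.Connected) (a b c d : V) :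
    G.dist a d ≤ G.dist a b + G.dist b c + G.dist c d :=
  hG.dist_triangle.trans (Nat.add_le_add_right hG.dist_triangle _)

theorem Walk.dist_getVert_add_le (p : G.Walk u v) (i n : ℕ) :
    G.dist (p.getVert i) (p.getVert (i + n)) ≤ n := by
  have h := dist_le ((p.drop i).take n)
  rw [take_length, drop_getVert] at h
  exact h.trans inf_le_left

end SimpleGraph

section Eccentricity

variable {G : SimpleGraph V} {u v : V}

theorem IsShortestPath.dist_getVert_add {p : G.Walk u v} (hp : IsShortestPath G p) {i n : ℕ}
    (h : i + n ≤ p.length) : G.dist (p.getVert i) (p.getVert (i + n)) = n := by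
  have hsub := ((p.drop i).isSubwalk_take n).trans (p.isSubwalk_drop i)
  have h' := length_eq_dist_of_subwalk hp hsub
  rw [Walk.take_length, Walk.drop_length, Walk.drop_getVert] at h'
  omega

theorem IsShortestPath.dist_getVert {p : G.Walk u v} (hp : IsShortestPath G p) {i j : ℕ}
    (hi : i ≤ p.length) (hj : j ≤ p.length) :
    (G.dist (p.getVert i) (p.getVert j) : ℤ) = |(i : ℤ) - j| := by
  rcases le_total i j with hij | hij
  · obtain ⟨n, rfl⟩ := Nat.exists_eq_add_of_le hij
    rw [hp.dist_getVert_add hj]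
    simp
  · obtain ⟨n, rfl⟩ := Nat.exists_eq_add_of_le hij
    rw [dist_comm, hp.dist_getVert_add hi]
    simp

theorem exists_mem_support_dist_eq_walkDist (x : V) (p : G.Walk u v) :
    ∃ w ∈ p.support, G.dist x w = walkDist G x p :=
  Nat.sInf_mem (s := {n | ∃ w ∈ p.support, G.dist x w = n}) ⟨_, u, p.start_mem_support, rfl⟩

theorem walkDist_le_dist {x w : V} {p : G.Walk u v} (hw : w ∈ p.support) :
    walkDist G x p ≤ G.dist x w :=
  Nat.sInf_le ⟨w, hw, rfl⟩

variable [Fintype V]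

theorem walkDist_le_walkEcc (x : V) (p : G.Walk u v) : walkDist G x p ≤ walkEcc G p :=
  le_csSup (Set.finite_range fun y ↦ walkDist G y p).bddAbove ⟨x, rfl⟩

theorem walkEcc_le {p : G.Walk u v} {n : ℕ} (h : ∀ x, walkDist G x p ≤ n) :
    walkEcc G p ≤ n :=
  csSup_le' <| by rintro _ ⟨x, rfl⟩; exact h x

theorem exists_getVert_dist_le_walkEcc (x : V) (p : G.Walk u v) :
    ∃ i ≤ p.length, G.dist x (p.getVert i) ≤ walkEcc G p := by
  obtain ⟨w, hw, hxw⟩ := exists_mem_support_dist_eq_walkDist x p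
  obtain ⟨i, rfl, hi⟩ := Walk.mem_support_iff_exists_getVert.mp hw
  exact ⟨i, hi, hxw ▸ walkDist_le_walkEcc x p⟩

theorem exists_isShortestPath_walkEcc_eq_minK [Nonempty V] (G : SimpleGraph V) :
    ∃ (u v : V) (p : G.Walk u v), IsShortestPath G p ∧ walkEcc G p = minK G := by
  inhabit V
  refine Nat.sInf_mem
    (s := {n | ∃ (u v : V) (p : G.Walk u v), IsShortestPath G p ∧ walkEcc G p = n})
    ⟨_, default, default, .nil, ?_, rfl⟩
  simp [IsShortestPath]

end Eccentricity

section Shadow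

variable {G : SimpleGraph V} {p q u v : V} {P : G.Walk p q} {D : G.Walk u v}

theorem exists_abs_sub_le_of_isDiameter [Fintype V] (hG : G.Connected) (hP : IsShortestPath G P)
    (hD : IsDiameter G D) {k : ℕ} {f : ℕ → ℕ} (hf : ∀ m, f m ≤ P.length)
    (hfk : ∀ m, G.dist (D.getVert m) (P.getVert (f m)) ≤ k) {t : ℕ} (ht : t ≤ P.length) :
    ∃ m ≤ D.length, |(f m : ℤ) - t| ≤ 2 * k := by
  have hdist (i j : ℕ) := hP.dist_getVert (hf i) (hf j)
  have hfk' (m : ℕ) : G.dist (P.getVert (f m)) (D.getVert m) ≤ k := G.dist_comm ▸ hfk m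
  have hPD : P.length ≤ D.length := hP ▸ hD.2 p q
  have hstep : ∀ m < D.length, |(f (m + 1) : ℤ) - f m| ≤ 2 * k + 1 := by
    intro m _
    have h := hG.dist_triangle₃ (P.getVert (f m)) (D.getVert m) (D.getVert (m + 1))
      (P.getVert (f (m + 1)))
    have := hfk' m
    have := hfk (m + 1)
    have := D.dist_getVert_add_le m 1
    have := hdist m (m + 1)
    rw [abs_sub_comm]
    omega
  have hends : D.length ≤ |(f 0 : ℤ) - f D.length| + 2 * k := by
    have h := hG.dist_triangle₃ u (P.getVert (f 0)) (P.getVert (f D.length)) v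
    have h0 := hfk 0
    have hd := hfk' D.length
    rw [Walk.getVert_zero] at h0
    rw [Walk.getVert_length] at hd
    have hDuv : D.length = G.dist u v := hD.1
    have := hdist 0 D.length
    omega
  have hf0 := hf 0
  have hfd := hf D.length
  obtain ⟨m, hm, hlo, hhi⟩ := exists_mem_Icc_of_abs_sub_le (g := fun m ↦ (f m : ℤ))
    (lo := t - 2 * k) (s := 4 * k) (fun m hm ↦ (hstep m hm).trans (by omega))
    (by simp only [abs_eq_max_neg] at hends; omega) (by simp only [abs_eq_max_neg] at hends; omega)
  exact ⟨m, hm, abs_le.mpr ⟨by omega, by omega⟩⟩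

variable [Fintype V]

theorem walkDist_le_four_mul_walkEcc (hG : G.Connected) (hP : IsShortestPath G P)
    (hD : IsDiameter G D) (x : V) : walkDist G x D ≤ 4 * walkEcc G P := by
  obtain ⟨t, ht, hxt⟩ := exists_getVert_dist_le_walkEcc x P
  choose f hf hfk using fun m ↦ exists_getVert_dist_le_walkEcc (D.getVert m) P
  obtain ⟨m, hm, hmt⟩ := exists_abs_sub_le_of_isDiameter hG hP hD hf hfk ht
  have hPt := hP.dist_getVert ht (hf m)
  have hDm : G.dist (P.getVert (f m)) (D.getVert m) ≤ walkEcc G P := G.dist_comm ▸ hfk m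
  calc walkDist G x D ≤ G.dist x (D.getVert m) :=
        walkDist_le_dist (Walk.mem_support_iff_exists_getVert.mpr ⟨m, rfl, hm⟩)
    _ ≤ G.dist x (P.getVert t) + G.dist (P.getVert t) (P.getVert (f m)) +
        G.dist (P.getVert (f m)) (D.getVert m) := hG.dist_triangle₃ _ _ _ _
    _ ≤ 4 * walkEcc G P := by rw [abs_sub_comm] at hmt; omega

theorem walkEcc_le_four_mul_minK (hG : G.Connected) (hD : IsDiameter G D) :
    walkEcc G D ≤ 4 * minK G := by
  have := hG.nonempty
  obtain ⟨_, _, P, hP, hPk⟩ := exists_isShortestPath_walkEcc_eq_minK G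
  exact walkEcc_le fun x ↦ hPk ▸ walkDist_le_four_mul_walkEcc hG hP hD x

end Shadow

theorem stmt9 [Fintype V] (G : SimpleGraph V) (hG : G.Connected) :
    (∀ (u v : V) (D : G.Walk u v), IsDiameter G D → walkEcc G D ≤ 4 * minK G) ∧
    maxS G ≤ 4 * minK G :=
  ⟨fun _ _ _ hD ↦ walkEcc_le_four_mul_minK hG hD,
    csSup_le' <| by rintro _ ⟨_, _, _, hD, rfl⟩; exact walkEcc_le_four_mul_minK hG hD⟩
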